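/- Let φ : G₁ → G₂ be an isomorphism of profinite groups, where G₁ and G₂ fit into extensions 1 → Δᵢ → Gᵢ → Qᵢ → 1 with Δ₁, Δ₂ topologically finitely generated closed normal subgroups and Q₁, Q₂ very elastic profinite groups. Then φ(Δ₁) = Δ₂. -/

import Mathlib

/-- A closed subgroup `N` of a topological group is *topologically finitely generated* if it is
the topological closure of the subgroup generated by a finite subset of `N`. -/
def TopFG {G : Type*} [Group G] [TopologicalSpace G] [IsTopologicalGroup G]
    (N : Subgroup G) : Prop :=
  ∃ S : Finset G, (S : Set G) ⊆ (N : Set G) ∧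
    (Subgroup.closure (S : Set G)).topologicalClosure = N

/-- A topological group `G` is *elastic* if every topologically finitely generated closed
normal subgroup `N` of an open subgroup `H` of `G` is either trivial or open in `G`. -/
def IsElastic (G : Type*) [Group G] [TopologicalSpace G] [IsTopologicalGroup G] : Prop :=
  ∀ H N : Subgroup G, IsOpen (H : Set G) → N ≤ H → IsClosed (N : Set G) →
    (∀ h ∈ H, ∀ n ∈ N, h * n * h⁻¹ ∈ N) → TopFG N →
    N = ⊥ ∨ IsOpen (N : Set G)

/-- `G` is *very elastic* if it is elastic and not topologically finitely generated. -/
def IsVeryElastic (G : Type*) [Group G] [TopologicalSpace G] [IsTopologicalGroup G] : Prop :=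
  IsElastic G ∧ ¬ TopFG (⊤ : Subgroup G)

/-! The image of `Δ₁` in `Q₂ = G₂ ⧸ Δ₂` is a topologically finitely generated closed normal
subgroup, so by elasticity it is trivial or open. An open subgroup of the compact group `Q₂` has
finite index, so if it were open, `Q₂` would be topologically finitely generated, which being very
elastic forbids. Hence `φ(Δ₁) ≤ Δ₂`, and the same argument for `φ⁻¹` gives equality. -/

section

variable {G H : Type*} [Group G] [TopologicalSpace G] [IsTopologicalGroup G]
  [Group H] [TopologicalSpace H] [IsTopologicalGroup H]

theorem TopFG.isClosed {N : Subgroup G} (h : TopFG N) : IsClosed (N : Set G) := by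
  obtain ⟨S, -, rfl⟩ := h
  exact Subgroup.isClosed_topologicalClosure _

theorem TopFG.map [CompactSpace G] [T2Space H] {N : Subgroup G} (h : TopFG N) {f : G →* H}
    (hf : Continuous f) : TopFG (N.map f) := by
  classical
  obtain ⟨S, hSN, rfl⟩ := h
  refine ⟨S.image f, by simpa using Set.image_mono hSN, SetLike.coe_injective ?_⟩
  rw [Subgroup.topologicalClosure_coe, Finset.coe_image, ← MonoidHom.map_closure,
    Subgroup.coe_map, Subgroup.coe_map, Subgroup.topologicalClosure_coe,
    hf.isClosedMap.closure_image_eq_of_continuous hf]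

theorem TopFG.top_of_isOpen [CompactSpace G] {N : Subgroup G} (h : TopFG N)
    (hN : IsOpen (N : Set G)) : TopFG (⊤ : Subgroup G) := by
  classical
  obtain ⟨S, -, hS⟩ := h
  -- `N` has finite index, so `S` together with coset representatives generates `G`.
  have := N.quotient_finite_of_isOpen hN
  let T : Finset G := (Set.finite_range (Quotient.out : G ⧸ N → G)).toFinset
  refine ⟨S ∪ T, Set.subset_univ _, eq_top_iff.2 fun g _ => ?_⟩
  set K := (Subgroup.closure ((S ∪ T : Finset G) : Set G)).topologicalClosure
  have hNK : N ≤ K := hS ▸ Subgroup.topologicalClosure_mono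
    (Subgroup.closure_mono (by simp))
  have hTK : (g : G ⧸ N).out ∈ K :=
    Subgroup.le_topologicalClosure _ (Subgroup.subset_closure (by simp [T]))
  simpa using K.mul_mem hTK (hNK (QuotientGroup.eq.mp (Quotient.out_eq (g : G ⧸ N))))

theorem IsVeryElastic.eq_bot_of_topFG [CompactSpace G] (hG : IsVeryElastic G)
    {N : Subgroup G} [N.Normal] (h : TopFG N) : N = ⊥ :=
  (hG.1 ⊤ N isOpen_univ le_top h.isClosed (fun g _ n hn => ‹N.Normal›.conj_mem n hn g)
    h).resolve_right fun hN => hG.2 (h.top_of_isOpen hN)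

theorem Subgroup.map_le_of_isVeryElastic_quotient [CompactSpace G] [CompactSpace H]
    {f : G →* H} (hf : Continuous f) (hfs : Function.Surjective f)
    {Δ : Subgroup G} [Δ.Normal] (hΔ : TopFG Δ)
    {Δ' : Subgroup H} [Δ'.Normal] (hΔ' : IsClosed (Δ' : Set H))
    (hQ : IsVeryElastic (H ⧸ Δ')) : Δ.map f ≤ Δ' := by
  -- as an instance, this makes `H ⧸ Δ'` Hausdorff
  have : IsClosed (Δ' : Set H) := hΔ'
  have : (Δ.map ((QuotientGroup.mk' Δ').comp f)).Normal :=
    ‹Δ.Normal›.map _ ((QuotientGroup.mk'_surjective Δ').comp hfs)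
  have hbot := hQ.eq_bot_of_topFG (hΔ.map (f := (QuotientGroup.mk' Δ').comp f)
    (QuotientGroup.continuous_mk.comp hf))
  rwa [← Subgroup.map_map, Subgroup.map_eq_bot_iff, QuotientGroup.ker_mk'] at hbot

end

theorem stmt4_general {G₁ G₂ : Type*}
    [Group G₁] [TopologicalSpace G₁] [IsTopologicalGroup G₁]
    [CompactSpace G₁]
    [Group G₂] [TopologicalSpace G₂] [IsTopologicalGroup G₂]
    [CompactSpace G₂]
    (φ : G₁ ≃* G₂) (hφ : Continuous φ) (hφ' : Continuous φ.symm)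
    (Δ₁ : Subgroup G₁) (Δ₂ : Subgroup G₂) [Δ₁.Normal] [Δ₂.Normal]
    (hΔ₁c : IsClosed (Δ₁ : Set G₁)) (hΔ₂c : IsClosed (Δ₂ : Set G₂))
    (hΔ₁fg : TopFG Δ₁) (hΔ₂fg : TopFG Δ₂)
    (hQ₁ : IsVeryElastic (G₁ ⧸ Δ₁)) (hQ₂ : IsVeryElastic (G₂ ⧸ Δ₂)) :
    Δ₁.map φ.toMonoidHom = Δ₂ := by
  refine le_antisymm
    (Subgroup.map_le_of_isVeryElastic_quotient hφ φ.surjective hΔ₁fg hΔ₂c hQ₂) ?_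
  rw [Subgroup.map_equiv_eq_comap_symm', ← Subgroup.map_le_iff_le_comap]
  exact Subgroup.map_le_of_isVeryElastic_quotient hφ' φ.symm.surjective hΔ₂fg hΔ₁c hQ₁

/-- Let `φ : G₁ → G₂` be an isomorphism of profinite groups, where each `Gᵢ` has a
topologically finitely generated closed normal subgroup `Δᵢ` with very elastic quotient
`Gᵢ ⧸ Δᵢ`.  Then `φ(Δ₁) = Δ₂`. -/
theorem stmt4 {G₁ G₂ : Type*}
    [Group G₁] [TopologicalSpace G₁] [IsTopologicalGroup G₁]
    [CompactSpace G₁] [TotallyDisconnectedSpace G₁] [T2Space G₁]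
    [Group G₂] [TopologicalSpace G₂] [IsTopologicalGroup G₂]
    [CompactSpace G₂] [TotallyDisconnectedSpace G₂] [T2Space G₂]
    (φ : G₁ ≃* G₂) (hφ : Continuous φ) (hφ' : Continuous φ.symm)
    (Δ₁ : Subgroup G₁) (Δ₂ : Subgroup G₂) [Δ₁.Normal] [Δ₂.Normal]
    (hΔ₁c : IsClosed (Δ₁ : Set G₁)) (hΔ₂c : IsClosed (Δ₂ : Set G₂))
    (hΔ₁fg : TopFG Δ₁) (hΔ₂fg : TopFG Δ₂)
    (hQ₁ : IsVeryElastic (G₁ ⧸ Δ₁)) (hQ₂ : IsVeryElastic (G₂ ⧸ Δ₂)) :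
    Δ₁.map φ.toMonoidHom = Δ₂ :=
  stmt4_general φ hφ hφ' Δ₁ Δ₂ hΔ₁c hΔ₂c hΔ₁fg hΔ₂fg hQ₁ hQ₂
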